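/- arXiv:1304.1810 — 3 statements merged into one kernel-verified Lean document; each statement's English description precedes it below -/
import Mathlib

section
/- Hoffman's circulation theorem: Let D = (V, A) be a finite directed graph and l, u : A → ℝ with l(a) ≤ u(a) for all a ∈ A. There exists a circulation f : A → ℝ (flow conservation at every vertex) with l(a) ≤ f(a) ≤ u(a) for all a, if and only if for every subset U ⊆ V, l(δ⁻(U)) ≤ u(δ⁺(U)), where δ⁺(U) (resp. δ⁻(U)) is the set of arcs leaving (resp. entering) U. -/
/-!
Minimise the total positive excess `∑ v, max (inflow v - outflow v) 0` over the compact box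
`l ≤ f ≤ u`. At a minimiser `f`, suppose some vertex `s` has positive excess, and let `U` be the
set of vertices reachable from `s` in the residual graph. Pushing a little flow from `s` to any
vertex of `U` would decrease the objective, so every vertex of `U` has nonnegative excess, and
the excesses over `U` add up to something positive. But every arc leaving `U` is saturated and
every arc entering `U` is at its lower bound, so that sum equals `l(δ⁻(U)) - u(δ⁺(U)) ≤ 0`.
Hence no excess is positive, and since the excesses sum to zero, `f` is a circulation.
-/

open Finset Filter Topology

section NetInflow

variable {V A : Type*} [DecidableEq V] [Fintype A] (tail head : A → V)

noncomputable def netInflow : (A → ℝ) →ₗ[ℝ] V → ℝ :=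
  Fintype.linearCombination ℝ fun a => Pi.single (head a) 1 - Pi.single (tail a) 1

theorem netInflow_apply (f : A → ℝ) (v : V) :
    netInflow tail head f v =
      ∑ a ∈ univ.filter (fun a => head a = v), f a -
        ∑ a ∈ univ.filter (fun a => tail a = v), f a := by
  simp [netInflow, Fintype.linearCombination_apply, Pi.single_apply, sum_filter, mul_sub,
    sum_sub_distrib, eq_comm]

theorem netInflow_eq_zero_iff (f : A → ℝ) :
    netInflow tail head f = 0 ↔
      ∀ v, ∑ a ∈ univ.filter (fun a => tail a = v), f a =
        ∑ a ∈ univ.filter (fun a => head a = v), f a := by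
  simp only [funext_iff, netInflow_apply, Pi.zero_apply, sub_eq_zero]
  exact forall_congr' fun v => eq_comm

theorem netInflow_single [DecidableEq A] (a : A) (c : ℝ) :
    netInflow tail head (Pi.single a c) = c • (Pi.single (head a) 1 - Pi.single (tail a) 1) :=
  Fintype.linearCombination_apply_single ℝ _ a c

theorem sum_netInflow (f : A → ℝ) (U : Finset V) :
    ∑ v ∈ U, netInflow tail head f v =
      ∑ a ∈ univ.filter (fun a => head a ∈ U ∧ tail a ∉ U), f a -
        ∑ a ∈ univ.filter (fun a => tail a ∈ U ∧ head a ∉ U), f a := by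
  simp only [netInflow, Fintype.linearCombination_apply, Finset.sum_apply, Pi.smul_apply,
    Pi.sub_apply, Pi.single_apply, smul_eq_mul]
  rw [sum_comm, sum_filter, sum_filter, ← sum_sub_distrib]
  refine sum_congr rfl fun a _ => ?_
  simp only [mul_sub, sum_sub_distrib, mul_ite, mul_one, mul_zero, sum_ite_eq']
  by_cases head a ∈ U <;> by_cases tail a ∈ U <;> simp [*]

variable [Fintype V]

theorem sum_univ_netInflow (f : A → ℝ) : ∑ v, netInflow tail head f v = 0 := by
  simp [sum_netInflow]

noncomputable def positiveExcess (f : A → ℝ) : ℝ :=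
  ∑ v, max (netInflow tail head f v) 0

theorem continuous_positiveExcess : Continuous (positiveExcess tail head) :=
  continuous_finsetSum _ fun v _ =>
    ((continuous_apply v).comp (netInflow tail head).continuous_of_finiteDimensional).max
      continuous_const

end NetInflow

theorem eventually_add_mul_le {x c g : ℝ} (hx : x ≤ c) (hg : 0 < g → x < c) :
    ∀ᶠ δ in 𝓝[>] 0, x + δ * g ≤ c := by
  rcases le_or_gt g 0 with hg_nonpos | hg_pos
  · filter_upwards [self_mem_nhdsWithin] with δ (hδ : 0 < δ)
    nlinarith
  · have hlim : Tendsto (fun δ : ℝ => x + δ * g) (𝓝[>] 0) (𝓝 x) := by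
      refine tendsto_nhdsWithin_of_tendsto_nhds ?_
      simpa using ((continuous_id.mul continuous_const).const_add x).tendsto (0 : ℝ)
    exact (hlim.eventually (gt_mem_nhds (hg hg_pos))).mono fun _ => le_of_lt

section FeasibleDirection

variable {A : Type*} (l u f : A → ℝ)

def IsFeasibleDirection (g : A → ℝ) : Prop :=
  ∀ a, (0 < g a → f a < u a) ∧ (g a < 0 → l a < f a)

variable {l u f}

theorem isFeasibleDirection_zero : IsFeasibleDirection l u f 0 := by
  simp [IsFeasibleDirection]

theorem IsFeasibleDirection.add {g g' : A → ℝ} (hg : IsFeasibleDirection l u f g)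
    (hg' : IsFeasibleDirection l u f g') : IsFeasibleDirection l u f (g + g') := by
  intro a
  have hsum : (g + g') a = g a + g' a := rfl
  refine ⟨fun h => ?_, fun h => ?_⟩
  · rcases lt_or_ge 0 (g a) with h' | h'
    exacts [(hg a).1 h', (hg' a).1 (by linarith)]
  · rcases lt_or_ge (g a) 0 with h' | h'
    exacts [(hg a).2 h', (hg' a).2 (by linarith)]

theorem isFeasibleDirection_single [DecidableEq A] (a : A) {c : ℝ} (hpos : 0 < c → f a < u a)
    (hneg : c < 0 → l a < f a) : IsFeasibleDirection l u f (Pi.single a c) := by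
  intro b
  rcases eq_or_ne b a with rfl | hb
  · simpa using ⟨hpos, hneg⟩
  · simp [hb]

theorem IsFeasibleDirection.eventually_add_smul_mem_Icc [Finite A] {g : A → ℝ}
    (hg : IsFeasibleDirection l u f g) (hf : f ∈ Set.Icc l u) :
    ∀ᶠ δ in 𝓝[>] (0 : ℝ), f + δ • g ∈ Set.Icc l u := by
  have hupper (a : A) : ∀ᶠ δ in 𝓝[>] (0 : ℝ), f a + δ * g a ≤ u a :=
    eventually_add_mul_le (hf.2 a) (hg a).1
  have hlower (a : A) : ∀ᶠ δ in 𝓝[>] (0 : ℝ), -f a + δ * -g a ≤ -l a :=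
    eventually_add_mul_le (neg_le_neg (hf.1 a)) fun h => neg_lt_neg ((hg a).2 (neg_pos.1 h))
  filter_upwards [eventually_all.2 hupper, eventually_all.2 hlower] with δ hu hl
  exact ⟨fun a => by simp only [Pi.add_apply, Pi.smul_apply, smul_eq_mul]; linarith [hl a],
    fun a => hu a⟩

end FeasibleDirection

theorem sum_max_zero_add_transfer_lt {V : Type*} [Fintype V] [DecidableEq V] {x : V → ℝ}
    {s t : V} {δ : ℝ} (hδ : 0 < δ) (hs : δ ≤ x s) (ht : x t ≤ -δ) :
    ∑ v, max ((x + δ • (Pi.single t 1 - Pi.single s 1) : V → ℝ) v) 0 < ∑ v, max (x v) 0 := by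
  have hst : s ≠ t := by rintro rfl; linarith
  refine sum_lt_sum (fun v _ => ?_) ⟨s, mem_univ s, ?_⟩
  · rcases eq_or_ne v s with rfl | hvs
    · simpa [hst] using Or.inl ⟨hδ.le, by linarith⟩
    · rcases eq_or_ne v t with rfl | hvt
      · simpa [hvs] using Or.inr (by linarith)
      · simp [hvs, hvt]
  · simpa [hst] using ⟨hδ, by linarith⟩

section Cuts

variable {V A : Type*} [DecidableEq V] [Fintype A] (tail head : A → V) (l u : A → ℝ)

/-- Reachability from `s` in the residual graph of `f`, phrased without paths: the vertices to
which excess can be moved from `s` by a feasible change of `f`. -/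
def residualReach (f : A → ℝ) (s : V) : Set V :=
  {t | ∃ g, IsFeasibleDirection l u f g ∧
    netInflow tail head g = Pi.single t 1 - Pi.single s 1}

variable {tail head l u}

theorem self_mem_residualReach (f : A → ℝ) (s : V) : s ∈ residualReach tail head l u f s :=
  ⟨0, isFeasibleDirection_zero, by simp⟩

theorem head_mem_residualReach {f : A → ℝ} {s : V} {a : A}
    (ha : tail a ∈ residualReach tail head l u f s) (hlt : f a < u a) :
    head a ∈ residualReach tail head l u f s := by
  classical
  obtain ⟨g, hg, hgt⟩ := ha
  refine ⟨g + Pi.single a 1, hg.add (isFeasibleDirection_single a (fun _ => hlt) ?_), ?_⟩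
  · intro h; norm_num at h
  · rw [map_add, hgt, netInflow_single]
    module

theorem tail_mem_residualReach {f : A → ℝ} {s : V} {a : A}
    (ha : head a ∈ residualReach tail head l u f s) (hlt : l a < f a) :
    tail a ∈ residualReach tail head l u f s := by
  classical
  obtain ⟨g, hg, hgt⟩ := ha
  refine ⟨g + Pi.single a (-1), hg.add (isFeasibleDirection_single a ?_ fun _ => hlt), ?_⟩
  · intro h; norm_num at h
  · rw [map_add, hgt, netInflow_single]
    module

theorem sum_netInflow_eq_of_saturated {f : A → ℝ} {U : Finset V}
    (hin : ∀ a, head a ∈ U → tail a ∉ U → f a = l a)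
    (hout : ∀ a, tail a ∈ U → head a ∉ U → f a = u a) :
    ∑ v ∈ U, netInflow tail head f v =
      ∑ a ∈ univ.filter (fun a => head a ∈ U ∧ tail a ∉ U), l a -
        ∑ a ∈ univ.filter (fun a => tail a ∈ U ∧ head a ∉ U), u a := by
  rw [sum_netInflow]
  congr 1 <;> refine sum_congr rfl fun a ha => ?_
  · exact hin a (mem_filter.1 ha).2.1 (mem_filter.1 ha).2.2
  · exact hout a (mem_filter.1 ha).2.1 (mem_filter.1 ha).2.2

theorem cut_condition_of_netInflow_eq_zero {f : A → ℝ} (hcirc : netInflow tail head f = 0)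
    (hf : f ∈ Set.Icc l u) (U : Finset V) :
    ∑ a ∈ univ.filter (fun a => head a ∈ U ∧ tail a ∉ U), l a ≤
      ∑ a ∈ univ.filter (fun a => tail a ∈ U ∧ head a ∉ U), u a := by
  have hbalance := sum_netInflow tail head f U
  simp only [hcirc, Pi.zero_apply, sum_const_zero] at hbalance
  calc ∑ a ∈ univ.filter (fun a => head a ∈ U ∧ tail a ∉ U), l a
      ≤ ∑ a ∈ univ.filter (fun a => head a ∈ U ∧ tail a ∉ U), f a :=
        sum_le_sum fun a _ => hf.1 a
    _ = ∑ a ∈ univ.filter (fun a => tail a ∈ U ∧ head a ∉ U), f a := by linarith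
    _ ≤ ∑ a ∈ univ.filter (fun a => tail a ∈ U ∧ head a ∉ U), u a :=
        sum_le_sum fun a _ => hf.2 a

variable [Fintype V]

theorem netInflow_nonneg_of_mem_residualReach {f : A → ℝ} {s t : V} (hf : f ∈ Set.Icc l u)
    (hmin : IsMinOn (positiveExcess tail head) (Set.Icc l u) f)
    (hs : 0 < netInflow tail head f s) (ht : t ∈ residualReach tail head l u f s) :
    0 ≤ netInflow tail head f t := by
  obtain ⟨g, hg, hgt⟩ := ht
  by_contra! ht
  have hsmall (c : ℝ) (hc : 0 < c) : ∀ᶠ δ in 𝓝[>] (0 : ℝ), δ < c :=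
    eventually_nhdsWithin_of_eventually_nhds (eventually_lt_nhds hc)
  obtain ⟨δ, hδ_mem, hδ_Ioi, hδs, hδt⟩ := ((hg.eventually_add_smul_mem_Icc hf).and
    (eventually_mem_nhdsWithin.and ((hsmall _ hs).and (hsmall _ (neg_pos.2 ht))))).exists
  have hδ_pos : (0 : ℝ) < δ := hδ_Ioi
  have hle : positiveExcess tail head f ≤ positiveExcess tail head (f + δ • g) := hmin hδ_mem
  refine hle.not_gt ?_
  have := sum_max_zero_add_transfer_lt hδ_pos hδs.le (x := netInflow tail head f) (t := t)
    (by linarith)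
  simpa [positiveExcess, hgt] using this

theorem netInflow_nonpos_of_isMinOn
    (hcut : ∀ U : Finset V,
      ∑ a ∈ univ.filter (fun a => head a ∈ U ∧ tail a ∉ U), l a ≤
        ∑ a ∈ univ.filter (fun a => tail a ∈ U ∧ head a ∉ U), u a)
    {f : A → ℝ} (hf : f ∈ Set.Icc l u)
    (hmin : IsMinOn (positiveExcess tail head) (Set.Icc l u) f) (s : V) :
    netInflow tail head f s ≤ 0 := by
  classical
  by_contra! hs
  set U := univ.filter (· ∈ residualReach tail head l u f s)
  have hmem (v : V) : v ∈ U ↔ v ∈ residualReach tail head l u f s := by simp [U]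
  have hin (a : A) (ha : head a ∈ U) (hna : tail a ∉ U) : f a = l a := by
    by_contra hne
    exact hna ((hmem _).2 (tail_mem_residualReach ((hmem _).1 ha)
      ((hf.1 a).lt_of_ne (Ne.symm hne))))
  have hout (a : A) (ha : tail a ∈ U) (hna : head a ∉ U) : f a = u a := by
    by_contra hne
    exact hna ((hmem _).2 (head_mem_residualReach ((hmem _).1 ha) ((hf.2 a).lt_of_ne hne)))
  have hU_nonneg (t : V) (ht : t ∈ U) : 0 ≤ netInflow tail head f t :=
    netInflow_nonneg_of_mem_residualReach hf hmin hs ((hmem t).1 ht)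
  have hs_le := single_le_sum hU_nonneg ((hmem s).2 (self_mem_residualReach f s))
  rw [sum_netInflow_eq_of_saturated hin hout] at hs_le
  linarith [hcut U]

theorem exists_netInflow_eq_zero_of_cut (hlu : l ≤ u)
    (hcut : ∀ U : Finset V,
      ∑ a ∈ univ.filter (fun a => head a ∈ U ∧ tail a ∉ U), l a ≤
        ∑ a ∈ univ.filter (fun a => tail a ∈ U ∧ head a ∉ U), u a) :
    ∃ f ∈ Set.Icc l u, netInflow tail head f = 0 := by
  obtain ⟨f, hf, hmin⟩ := isCompact_Icc.exists_isMinOn (Set.nonempty_Icc.2 hlu)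
    (continuous_positiveExcess tail head).continuousOn
  have hnonpos (v : V) (_ : v ∈ univ) := netInflow_nonpos_of_isMinOn hcut hf hmin v
  refine ⟨f, hf, funext fun v => ?_⟩
  exact (sum_eq_zero_iff_of_nonpos hnonpos).1 (sum_univ_netInflow tail head f) v (mem_univ v)

end Cuts

/-- Hoffman's circulation theorem: in a finite digraph with arc bounds `l ≤ u`,
a circulation `f` with `l ≤ f ≤ u` exists iff `l(δ⁻(U)) ≤ u(δ⁺(U))` for every `U ⊆ V`. -/
theorem hoffman_circulation {V A : Type*} [Fintype V] [Fintype A] [DecidableEq V]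
    (tail head : A → V) (l u : A → ℝ) (hlu : ∀ a, l a ≤ u a) :
    (∃ f : A → ℝ,
      (∀ v : V,
        ∑ a ∈ Finset.univ.filter (fun a => tail a = v), f a =
        ∑ a ∈ Finset.univ.filter (fun a => head a = v), f a) ∧
      (∀ a, l a ≤ f a ∧ f a ≤ u a)) ↔
    (∀ U : Finset V,
      ∑ a ∈ Finset.univ.filter (fun a => head a ∈ U ∧ tail a ∉ U), l a ≤
      ∑ a ∈ Finset.univ.filter (fun a => tail a ∈ U ∧ head a ∉ U), u a) := by
  simp only [← netInflow_eq_zero_iff]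
  constructor
  · rintro ⟨f, hcirc, hf⟩
    exact cut_condition_of_netInflow_eq_zero hcirc ⟨fun a => (hf a).1, fun a => (hf a).2⟩
  · intro hcut
    obtain ⟨f, hf, hcirc⟩ := exists_netInflow_eq_zero_of_cut hlu hcut
    exact ⟨f, hcirc, fun a => ⟨hf.1 a, hf.2 a⟩⟩
end

section
/- Integrality in Hoffman's circulation theorem: if in addition l and u are integer-valued and a feasible circulation exists (i.e., l ≤ u and l(δ⁻(U)) ≤ u(δ⁺(U)) for all U ⊆ V), then there exists an integer-valued circulation f with l(a) ≤ f(a) ≤ u(a) for all arcs a. -/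
/-!
Induct on the total slack `∑ (u - l)`. If `l = u`, the cut conditions for `{v}` and its
complement force conservation at `v`. Otherwise pick an arc `a₀` with `l a₀ < u a₀` and try to
raise `l a₀` or to lower `u a₀` by one. If both moves violate a cut condition, there are tight
cuts `U` (entered by `a₀`) and `W` (left by `a₀`). The cut surplus `u(δ⁺U) - l(δ⁻U)` is
submodular, with defect `∑ (u - l)` over the arcs crossing between `U \ W` and `W \ U`; as `a₀`
is such an arc, the surplus of `U ∩ W` or of `U ∪ W` would be negative.
-/

open Finset

namespace Hoffman

variable {V A : Type*} [Fintype A] [DecidableEq V]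

section Defs

variable (tail head : A → V)

def inArcs (U : Finset V) : Finset A := univ.filter fun a => head a ∈ U ∧ tail a ∉ U

def outArcs (U : Finset V) : Finset A := univ.filter fun a => tail a ∈ U ∧ head a ∉ U

def crossingArcs (U W : Finset V) : Finset A :=
  univ.filter fun a => tail a ∈ U \ W ∧ head a ∈ W \ U ∨ tail a ∈ W \ U ∧ head a ∈ U \ W

def cutSurplus (l u : A → ℤ) (U : Finset V) : ℤ :=
  ∑ a ∈ outArcs tail head U, u a - ∑ a ∈ inArcs tail head U, l a

def IsCirculation (f : A → ℤ) : Prop :=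
  ∀ v, ∑ a ∈ univ.filter (fun a => tail a = v), f a = ∑ a ∈ univ.filter (fun a => head a = v), f a

end Defs

variable {tail head : A → V}

theorem outArcs_compl [Fintype V] (U : Finset V) :
    outArcs tail head Uᶜ = inArcs tail head U := by
  ext a; simp [outArcs, inArcs, and_comm]

theorem inArcs_compl [Fintype V] (U : Finset V) :
    inArcs tail head Uᶜ = outArcs tail head U := by
  ext a; simp [outArcs, inArcs, and_comm]

theorem cutSurplus_compl_self [Fintype V] (f : A → ℤ) (U : Finset V) :
    cutSurplus tail head f f Uᶜ = -cutSurplus tail head f f U := by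
  simp [cutSurplus, outArcs_compl, inArcs_compl]

theorem sum_tail_sub_sum_head (f : A → ℤ) (v : V) :
    ∑ a ∈ univ.filter (fun a => tail a = v), f a - ∑ a ∈ univ.filter (fun a => head a = v), f a =
      cutSurplus tail head f f {v} := by
  simp only [cutSurplus, outArcs, inArcs, sum_filter, ← sum_sub_distrib, mem_singleton]
  refine sum_congr rfl fun a _ => ?_
  by_cases tail a = v <;> by_cases head a = v <;> simp_all

theorem isCirculation_of_cutSurplus_self_nonneg [Fintype V] {f : A → ℤ}
    (h : ∀ U, 0 ≤ cutSurplus tail head f f U) : IsCirculation tail head f := by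
  intro v
  have hv := h {v}
  have hvc := h {v}ᶜ
  rw [cutSurplus_compl_self] at hvc
  linarith [sum_tail_sub_sum_head (tail := tail) (head := head) f v]

theorem cutSurplus_eq_sum (l u : A → ℤ) (U : Finset V) :
    cutSurplus tail head l u U = ∑ a, ((if tail a ∈ U ∧ head a ∉ U then u a else 0) -
      if head a ∈ U ∧ tail a ∉ U then l a else 0) := by
  rw [cutSurplus, outArcs, inArcs, sum_filter, sum_filter, sum_sub_distrib]

theorem cutSurplus_inter_add_cutSurplus_union (l u : A → ℤ) (U W : Finset V) :
    cutSurplus tail head l u (U ∩ W) + cutSurplus tail head l u (U ∪ W) +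
        ∑ a ∈ crossingArcs tail head U W, (u a - l a) =
      cutSurplus tail head l u U + cutSurplus tail head l u W := by
  simp only [cutSurplus_eq_sum, crossingArcs, sum_filter, ← sum_add_distrib]
  refine sum_congr rfl fun a _ => ?_
  simp only [mem_inter, mem_union, mem_sdiff]
  by_cases tail a ∈ U <;> by_cases tail a ∈ W <;> by_cases head a ∈ U <;> by_cases head a ∈ W <;>
    simp [*] <;> ring

theorem cutSurplus_add_single [DecidableEq A] (l u : A → ℤ) (a₀ : A) (U : Finset V) :
    cutSurplus tail head (l + Pi.single a₀ 1) u U =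
      cutSurplus tail head l u U - if a₀ ∈ inArcs tail head U then 1 else 0 := by
  simp only [cutSurplus, Pi.add_apply, sum_add_distrib, sum_pi_single']
  ring

theorem cutSurplus_sub_single [DecidableEq A] (l u : A → ℤ) (a₀ : A) (U : Finset V) :
    cutSurplus tail head l (u - Pi.single a₀ 1) U =
      cutSurplus tail head l u U - if a₀ ∈ outArcs tail head U then 1 else 0 := by
  simp only [cutSurplus, Pi.sub_apply, sum_sub_distrib, sum_pi_single']
  ring

theorem cutSurplus_add_single_nonneg_or_sub_single_nonneg [DecidableEq A] {l u : A → ℤ}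
    (hlu : l ≤ u) (h : ∀ U, 0 ≤ cutSurplus tail head l u U) {a₀ : A} (ha₀ : l a₀ < u a₀) :
    (∀ U, 0 ≤ cutSurplus tail head (l + Pi.single a₀ 1) u U) ∨
      ∀ U, 0 ≤ cutSurplus tail head l (u - Pi.single a₀ 1) U := by
  by_contra! ⟨⟨U, hU⟩, ⟨W, hW⟩⟩
  rw [cutSurplus_add_single] at hU
  rw [cutSurplus_sub_single] at hW
  have hU_in : a₀ ∈ inArcs tail head U := by
    by_contra hn
    rw [if_neg hn] at hU
    linarith [h U]
  have hW_out : a₀ ∈ outArcs tail head W := by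
    by_contra hn
    rw [if_neg hn] at hW
    linarith [h W]
  rw [if_pos hU_in] at hU
  rw [if_pos hW_out] at hW
  have ha₀_crossing : a₀ ∈ crossingArcs tail head U W := by
    simp only [inArcs, outArcs, mem_filter, mem_univ, true_and] at hU_in hW_out
    simp [crossingArcs, hU_in, hW_out]
  have h_crossing : u a₀ - l a₀ ≤ ∑ a ∈ crossingArcs tail head U W, (u a - l a) :=
    single_le_sum (fun a _ => sub_nonneg.2 (hlu a)) ha₀_crossing
  linarith [cutSurplus_inter_add_cutSurplus_union (tail := tail) (head := head) l u U W,
    h (U ∩ W), h (U ∪ W)]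

theorem sum_toNat_sub_single_lt [DecidableEq A] {g : A → ℤ} {a₀ : A} (hg : 0 < g a₀) :
    ∑ a, (g a - (Pi.single a₀ 1 : A → ℤ) a).toNat < ∑ a, (g a).toNat := by
  refine sum_lt_sum (fun a _ => ?_) ⟨a₀, mem_univ _, by simp; omega⟩
  rcases eq_or_ne a a₀ with rfl | ha
  · simp
  · simp [ha]

theorem exists_isCirculation_of_cutSurplus_nonneg [Fintype V] (l u : A → ℤ) (hlu : l ≤ u)
    (h : ∀ U, 0 ≤ cutSurplus tail head l u U) :
    ∃ f, IsCirculation tail head f ∧ l ≤ f ∧ f ≤ u := by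
  classical
  by_cases heq : l = u
  · subst heq
    exact ⟨l, isCirculation_of_cutSurplus_self_nonneg h, le_rfl, le_rfl⟩
  obtain ⟨a₀, ha₀⟩ : ∃ a, l a < u a := by
    by_contra! hge
    exact heq (le_antisymm hlu hge)
  have hsingle : (0 : A → ℤ) ≤ Pi.single a₀ 1 := Pi.single_nonneg.2 zero_le_one
  rcases cutSurplus_add_single_nonneg_or_sub_single_nonneg hlu h ha₀ with h' | h'
  · have hlu' : l + Pi.single a₀ 1 ≤ u := fun a => by
      rcases eq_or_ne a a₀ with rfl | ha
      · simpa using ha₀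
      · simpa [ha] using hlu a
    obtain ⟨f, hf, hlf, hfu⟩ := exists_isCirculation_of_cutSurplus_nonneg _ _ hlu' h'
    exact ⟨f, hf, le_trans (le_add_of_nonneg_right hsingle) hlf, hfu⟩
  · have hlu' : l ≤ u - Pi.single a₀ 1 := fun a => by
      rcases eq_or_ne a a₀ with rfl | ha
      · simpa [Int.le_sub_one_iff] using ha₀
      · simpa [ha] using hlu a
    obtain ⟨f, hf, hlf, hfu⟩ := exists_isCirculation_of_cutSurplus_nonneg _ _ hlu' h'
    exact ⟨f, hf, hlf, le_trans hfu (sub_le_self _ hsingle)⟩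
termination_by ∑ a, (u a - l a).toNat
decreasing_by
  all_goals
    classical
    simp only [Pi.add_apply, Pi.sub_apply, sub_add_eq_sub_sub, sub_right_comm (u _)]
    exact sum_toNat_sub_single_lt (sub_pos.2 ha₀)

end Hoffman

/-- Integrality in Hoffman's circulation theorem: if `l, u : A → ℤ` satisfy `l ≤ u`
and `l(δ⁻(U)) ≤ u(δ⁺(U))` for all `U ⊆ V`, then there is an integer-valued
circulation `f` with `l ≤ f ≤ u`. -/
theorem hoffman_circulation_integral {V A : Type*} [Fintype V] [Fintype A] [DecidableEq V]
    (tail head : A → V) (l u : A → ℤ) (hlu : ∀ a, l a ≤ u a)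
    (hcut : ∀ U : Finset V,
      ∑ a ∈ Finset.univ.filter (fun a => head a ∈ U ∧ tail a ∉ U), l a ≤
      ∑ a ∈ Finset.univ.filter (fun a => tail a ∈ U ∧ head a ∉ U), u a) :
    ∃ f : A → ℤ,
      (∀ v : V,
        ∑ a ∈ Finset.univ.filter (fun a => tail a = v), f a =
        ∑ a ∈ Finset.univ.filter (fun a => head a = v), f a) ∧
      (∀ a, l a ≤ f a ∧ f a ≤ u a) := by
  obtain ⟨f, hf, hlf, hfu⟩ :=
    Hoffman.exists_isCirculation_of_cutSurplus_nonneg l u hlu fun U => sub_nonneg.2 (hcut U)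
  exact ⟨f, hf, fun a => ⟨hlf a, hfu a⟩⟩
end

section
/- Let D = (V, A) be a finite digraph, x : A → ℝ≥0 with x(δ⁺(v)) = x(δ⁻(v)) for all v, and let z(uv) = x(u→v) + x(v→u) on the underlying undirected edges. Let T⃗ ⊆ A be a set of arcs whose underlying undirected edge set T satisfies |T ∩ δ(U)| ≤ α·z(δ(U)) for all U ⊆ V, for some α > 0. Define l(a) = 1 if a ∈ T⃗ else 0, and u(a) = l(a) + 2α·x(a). Then for every U ⊆ V, l(δ⁻(U)) ≤ u(δ⁺(U)), so a circulation f with l ≤ f ≤ u exists by Hoffman's theorem. -/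
open Finset

section Cuts

variable {V : Type*} [DecidableEq V]

lemma card_filter_mem_sym2_mk_eq_one {U : Finset V} {a b : V} (ha : a ∉ U) (hb : b ∈ U) :
    (U.filter (· ∈ Sym2.mk a b)).card = 1 := by
  rw [card_eq_one]
  refine ⟨b, ?_⟩
  ext w
  simp only [mem_filter, mem_singleton, Sym2.mem_iff]
  constructor
  · rintro ⟨hw, rfl | rfl⟩
    · exact absurd hw ha
    · rfl
  · rintro rfl
    exact ⟨hb, Or.inr rfl⟩

/-- An arc and its reverse cannot both enter `U`, so forgetting orientation is injective on the
arcs entering `U`. -/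
lemma card_filter_enter_le_card_crossing_edges (T' : Finset (V × V)) (U : Finset V) :
    (T'.filter (fun p => p.2 ∈ U ∧ p.1 ∉ U)).card ≤
      ((T'.image fun p => Sym2.mk p.1 p.2).filter
        (fun e => (U.filter (· ∈ e)).card = 1)).card := by
  refine card_le_card_of_injOn (fun p => Sym2.mk p.1 p.2) ?_ ?_
  · rintro ⟨a, b⟩ hp
    simp only [coe_filter, Set.mem_ofPred_eq] at hp
    obtain ⟨hT, hb, ha⟩ := hp
    simp only [coe_filter, Set.mem_ofPred_eq]
    exact ⟨mem_image_of_mem _ hT, card_filter_mem_sym2_mk_eq_one ha hb⟩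
  · rintro ⟨a, b⟩ hp ⟨c, d⟩ hq h
    simp only [coe_filter, Set.mem_ofPred_eq] at hp hq
    rcases Sym2.eq_iff.mp h with ⟨rfl, rfl⟩ | ⟨rfl, rfl⟩
    · rfl
    · exact absurd hq.2.1 hp.2.2

variable [Fintype V] {M : Type*} [AddCommGroup M]

/-- Conservation at every vertex implies conservation across every cut: the arcs inside `U`
contribute equally to the total outflow and the total inflow of `U`. -/
lemma sum_cut_in_eq_sum_cut_out {x : V → V → M} (hcons : ∀ v, ∑ u, x v u = ∑ u, x u v)
    (U : Finset V) :
    ∑ u ∈ U, ∑ v ∈ Uᶜ, x v u = ∑ u ∈ U, ∑ v ∈ Uᶜ, x u v := by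
  have hout : ∑ u ∈ U, ∑ v, x u v = ∑ u ∈ U, ∑ v ∈ U, x u v + ∑ u ∈ U, ∑ v ∈ Uᶜ, x u v := by
    simp only [← sum_add_distrib, sum_add_sum_compl]
  have hin : ∑ u ∈ U, ∑ v, x v u = ∑ u ∈ U, ∑ v ∈ U, x v u + ∑ u ∈ U, ∑ v ∈ Uᶜ, x v u := by
    simp only [← sum_add_distrib, sum_add_sum_compl]
  have htot : ∑ u ∈ U, ∑ v, x u v = ∑ u ∈ U, ∑ v, x v u := sum_congr rfl fun u _ => hcons u
  rw [hout, hin, sum_comm (s := U) (t := U) (f := fun u v => x v u)] at htot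
  exact (add_left_cancel htot).symm

end Cuts

theorem thin_arcs_hoffman_condition_general {V : Type*} [Fintype V] [DecidableEq V]
    (x : V → V → ℝ)
    (hcons : ∀ v : V, ∑ u, x v u = ∑ u, x u v)
    (T' : Finset (V × V)) (α : ℝ)
    (hthin : ∀ U : Finset V,
      (((T'.image fun p => Sym2.mk p.1 p.2).filter
          (fun e => (U.filter (fun w => w ∈ e)).card = 1)).card : ℝ) ≤
        α * ∑ u ∈ U, ∑ v ∈ Uᶜ, (x u v + x v u)) :
    ∀ U : Finset V,
      ((T'.filter (fun p => p.2 ∈ U ∧ p.1 ∉ U)).card : ℝ) ≤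
      ∑ u ∈ U, ∑ v ∈ Uᶜ, ((if (u, v) ∈ T' then (1 : ℝ) else 0) + 2 * α * x u v) := by
  intro U
  calc ((T'.filter (fun p => p.2 ∈ U ∧ p.1 ∉ U)).card : ℝ)
      ≤ (((T'.image fun p => Sym2.mk p.1 p.2).filter
          (fun e => (U.filter (· ∈ e)).card = 1)).card : ℝ) := by
        exact_mod_cast card_filter_enter_le_card_crossing_edges T' U
    _ ≤ α * ∑ u ∈ U, ∑ v ∈ Uᶜ, (x u v + x v u) := hthin U
    _ = ∑ u ∈ U, ∑ v ∈ Uᶜ, 2 * α * x u v := by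
        simp only [sum_add_distrib, sum_cut_in_eq_sum_cut_out hcons U, ← mul_sum]
        ring
    _ ≤ ∑ u ∈ U, ∑ v ∈ Uᶜ, ((if (u, v) ∈ T' then (1 : ℝ) else 0) + 2 * α * x u v) := by
        gcongr with u _ v _
        exact le_add_of_nonneg_left (by positivity)

/-- Feasibility of Hoffman's condition for a thin arc set: let `x ≥ 0` be conservative
(`x(δ⁺(v)) = x(δ⁻(v))` for all `v`), `z uv = x(u→v) + x(v→u)`, and `T'` a set of arcs
whose underlying undirected edge set `T` satisfies `|T ∩ δ(U)| ≤ α · z(δ(U))` for all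
`U`. With `l = 𝟙_{T'}` and `u = l + 2αx`, we have `l(δ⁻(U)) ≤ u(δ⁺(U))` for all `U`. -/
theorem thin_arcs_hoffman_condition {V : Type*} [Fintype V] [DecidableEq V]
    (x : V → V → ℝ) (hx : ∀ u v, 0 ≤ x u v)
    (hcons : ∀ v : V, ∑ u, x v u = ∑ u, x u v)
    (T' : Finset (V × V)) (α : ℝ) (hα : 0 < α)
    (hthin : ∀ U : Finset V,
      (((T'.image fun p => Sym2.mk p.1 p.2).filter
          (fun e => (U.filter (fun w => w ∈ e)).card = 1)).card : ℝ) ≤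
        α * ∑ u ∈ U, ∑ v ∈ Uᶜ, (x u v + x v u)) :
    ∀ U : Finset V,
      ((T'.filter (fun p => p.2 ∈ U ∧ p.1 ∉ U)).card : ℝ) ≤
      ∑ u ∈ U, ∑ v ∈ Uᶜ, ((if (u, v) ∈ T' then (1 : ℝ) else 0) + 2 * α * x u v) :=
  thin_arcs_hoffman_condition_general x hcons T' α hthin
end
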